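/- Let N be the group of translations in Aff(V) and T an abelian regular subgroup. Then N ∩ T = C_N(T) = C_T(N), where C_N(T) denotes the centralizer of T in N and C_T(N) the centralizer of N in T. -/
import Mathlib


theorem stmt {F V : Type*} [Field F] [AddCommGroup V] [Module F V]
    (T : Subgroup (V ≃ᵃ[F] V))
    (hcomm : ∀ g ∈ T, ∀ h ∈ T, g * h = h * g)
    (hreg : ∀ v : V, ∃! g : V ≃ᵃ[F] V, g ∈ T ∧ g 0 = v)
    (N : Subgroup (V ≃ᵃ[F] V))
    (hN : ∀ g : V ≃ᵃ[F] V, g ∈ N ↔ ∃ x : V, ∀ z : V, g z = z + x) :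
    ∀ g : V ≃ᵃ[F] V,
      ((g ∈ N ⊓ T) ↔ (g ∈ N ∧ ∀ h ∈ T, g * h = h * g)) ∧
      ((g ∈ N ⊓ T) ↔ (g ∈ T ∧ ∀ h ∈ N, g * h = h * g)) := by
  intro g
  constructor
  · constructor
    · rintro ⟨hgN, hgT⟩
      exact ⟨hgN, fun h hh => hcomm g hgT h hh⟩
    · rintro ⟨hgN, hg⟩
      refine ⟨hgN, ?_⟩
      obtain ⟨x, hx⟩ := (hN g).1 hgN
      obtain ⟨t, ⟨htT, ht0⟩, -⟩ := hreg x
      have hgt : g = t := by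
        ext z
        obtain ⟨s, ⟨hsT, hs0⟩, -⟩ := hreg z
        have h1 : g (s 0) = s (g 0) := by
          have h := hg s hsT
          calc g (s 0) = (g * s) 0 := rfl
            _ = (s * g) 0 := by rw [h]
            _ = s (g 0) := rfl
        have h2 : t (s 0) = s (t 0) := by
          have h := hcomm t htT s hsT
          calc t (s 0) = (t * s) 0 := rfl
            _ = (s * t) 0 := by rw [h]
            _ = s (t 0) := rfl
        have hg0 : g 0 = x := by rw [hx 0, zero_add]
        rw [← hs0, h1, h2, hg0, ht0]
      rw [hgt]; exact htT
  · constructor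
    · rintro ⟨hgN, hgT⟩
      refine ⟨hgT, fun h hh => ?_⟩
      obtain ⟨x, hx⟩ := (hN g).1 hgN
      obtain ⟨y, hy⟩ := (hN h).1 hh
      ext z
      show g (h z) = h (g z)
      rw [hx, hy, hx, hy, add_assoc, add_assoc, add_comm x y]
    · rintro ⟨hgT, hg⟩
      refine ⟨(hN g).2 ⟨g 0, fun z => ?_⟩, hgT⟩
      have hz : AffineEquiv.constVAdd F V z ∈ N :=
        (hN _).2 ⟨z, fun w => by simp [add_comm]⟩
      have h := hg _ hz
      calc g z = g (AffineEquiv.constVAdd F V z 0) := by simp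
        _ = (g * AffineEquiv.constVAdd F V z) 0 := rfl
        _ = (AffineEquiv.constVAdd F V z * g) 0 := by rw [h]
        _ = z + g 0 := rfl
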